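/- Let 3/2<p<3, p+p^2/3<q<p+2p^2/3 and define c* = [p|Q|_p^{q-p} (ap/(2p^2-3q+3p))^{(2p^2-3q+3p)/p^2} (bp/(6pq-8p^2))^{(3q-3p-p^2)/p^2}]^{p/(pq-3q+3p)}. Then for every u ∈ S(c) with 0<c ≤ c*, I(u) ≥ (1/(p|Q|_p^{q-p})) |∇u|_p^{3(q-p)/p} [(c*)^{q-3(q-p)/p} - c^{q-3(q-p)/p}] ≥ 0; in particular i(c) = 0 for 0<c≤c*. -/

import Mathlib

/-!
On `S(c)` the Gagliardo–Nirenberg inequality bounds `(1/q)|u|_q^q` by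
`(1/(p|Q|_p^{q-p})) G^θ c^e`, where `G = |∇u|_p^p`, `θ = 3(q-p)/p² = p₁ + 2p₂` and
`e = q - 3(q-p)/p`. Weighted Young with weights `p₁ + p₂ = 1` bounds the gradient part
`(a/p) G + (b/(2p)) G²` from below by `K G^θ`, and `c*` is chosen so that `c*^e = p|Q|_p^{q-p} K`;
together these give the lower bound for `I`, which is nonnegative as long as `c ≤ c*`.
Conversely the dilations `u_t(x) = t^{3/p} u(t x)` stay in `S(c)` and have `|∇u_t|_p^p = t^p G`,
so `I(u_t) ≤ (a/p) t^p G + (b/(2p)) t^{2p} G² → 0` as `t → 0⁺`, whence `i(c) = 0`.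
-/

open MeasureTheory Real Set Filter

noncomputable section

abbrev E3 := EuclideanSpace ℝ (Fin 3)

def gradPow (p : ℝ) (u : E3 → ℝ) : ℝ := ∫ x : E3, ‖fderiv ℝ u x‖ ^ p
def lpPow (s : ℝ) (u : E3 → ℝ) : ℝ := ∫ x : E3, |u x| ^ s
def Wmem (p : ℝ) (u : E3 → ℝ) : Prop :=
  Differentiable ℝ u ∧ MeasureTheory.Integrable (fun x : E3 => |u x| ^ p) ∧
    MeasureTheory.Integrable (fun x : E3 => ‖fderiv ℝ u x‖ ^ p)
def Ifun (a b p q : ℝ) (u : E3 → ℝ) : ℝ :=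
  a / p * gradPow p u + b / (2 * p) * (gradPow p u) ^ 2 - 1 / q * lpPow q u
def Sset (p c : ℝ) : Set (E3 → ℝ) := {u | Wmem p u ∧ lpPow p u = c ^ p}
def ifun (a b p q c : ℝ) : ℝ := sInf (Ifun a b p q '' Sset p c)

def cstar (a b p q QN : ℝ) : ℝ :=
  (p * QN ^ (q-p) * (a*p/(2*p^2 - 3*q + 3*p)) ^ ((2*p^2 - 3*q + 3*p)/p^2) *
    (b*p/(6*p*q - 8*p^2)) ^ ((3*q - 3*p - p^2)/p^2)) ^ (p/(p*q - 3*q + 3*p))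

lemma integral_pow_three_mul_comp_smul (g : E3 → ℝ) {t : ℝ} (ht : 0 < t) :
    ∫ x : E3, t ^ 3 * g (t • x) = ∫ x : E3, g x := by
  rw [integral_const_mul, Measure.integral_comp_smul_of_nonneg volume g t (hR := ht.le)]
  simp [ht.ne']

lemma rpow_three_div_rpow {p t : ℝ} (hp : p ≠ 0) (ht : 0 ≤ t) : (t ^ (3 / p)) ^ p = t ^ 3 := by
  rw [← rpow_mul ht, div_mul_cancel₀ _ hp]
  norm_cast

def dilate (p t : ℝ) (u : E3 → ℝ) : E3 → ℝ := fun x => t ^ (3 / p) * u (t • x)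

lemma fderiv_dilate (p t : ℝ) (u : E3 → ℝ) (x : E3) :
    fderiv ℝ (dilate p t u) x = t ^ (3 / p) • t • fderiv ℝ u (t • x) := by
  have : dilate p t u = t ^ (3 / p) • fun y => u (t • y) := rfl
  rw [this, fderiv_const_smul_field, Pi.smul_apply, fderiv_comp_smul]

lemma abs_dilate_rpow {p t : ℝ} (hp : p ≠ 0) (ht : 0 < t) (u : E3 → ℝ) (x : E3) :
    |dilate p t u x| ^ p = t ^ 3 * |u (t • x)| ^ p := by
  rw [dilate, abs_mul, abs_of_pos (by positivity), mul_rpow (by positivity) (abs_nonneg _),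
    rpow_three_div_rpow hp ht.le]

lemma norm_fderiv_dilate_rpow {p t : ℝ} (hp : p ≠ 0) (ht : 0 < t) (u : E3 → ℝ) (x : E3) :
    ‖fderiv ℝ (dilate p t u) x‖ ^ p = t ^ 3 * (t ^ p * ‖fderiv ℝ u (t • x)‖ ^ p) := by
  rw [fderiv_dilate, norm_smul, norm_smul, norm_of_nonneg (by positivity), norm_of_nonneg ht.le,
    mul_rpow (by positivity) (by positivity), mul_rpow ht.le (norm_nonneg _),
    rpow_three_div_rpow hp ht.le]

lemma lpPow_dilate {p t : ℝ} (hp : p ≠ 0) (ht : 0 < t) (u : E3 → ℝ) :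
    lpPow p (dilate p t u) = lpPow p u := by
  simp only [lpPow, abs_dilate_rpow hp ht]
  exact integral_pow_three_mul_comp_smul (fun y => |u y| ^ p) ht

lemma gradPow_dilate {p t : ℝ} (hp : p ≠ 0) (ht : 0 < t) (u : E3 → ℝ) :
    gradPow p (dilate p t u) = t ^ p * gradPow p u := by
  simp only [gradPow, norm_fderiv_dilate_rpow hp ht, ← integral_const_mul]
  exact integral_pow_three_mul_comp_smul (fun y => t ^ p * ‖fderiv ℝ u y‖ ^ p) ht

lemma Wmem.dilate {p t : ℝ} (hp : p ≠ 0) (ht : 0 < t) {u : E3 → ℝ} (hu : Wmem p u) :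
    Wmem p (dilate p t u) := by
  obtain ⟨hdiff, hint, hgrad⟩ := hu
  refine ⟨(hdiff.comp (differentiable_id.const_smul t)).const_mul _, ?_, ?_⟩
  · simp only [abs_dilate_rpow hp ht]
    exact (hint.comp_smul ht.ne').const_mul _
  · simp only [norm_fderiv_dilate_rpow hp ht]
    exact ((hgrad.comp_smul ht.ne').const_mul _).const_mul _

lemma dilate_mem_Sset {p c t : ℝ} (hp : p ≠ 0) (ht : 0 < t) {u : E3 → ℝ} (hu : u ∈ Sset p c) :
    dilate p t u ∈ Sset p c :=
  ⟨hu.1.dilate hp ht, (lpPow_dilate hp ht u).trans hu.2⟩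

lemma lpPow_nonneg (s : ℝ) (u : E3 → ℝ) : 0 ≤ lpPow s u :=
  integral_nonneg fun _ => rpow_nonneg (abs_nonneg _) s

lemma gradPow_nonneg (p : ℝ) (u : E3 → ℝ) : 0 ≤ gradPow p u :=
  integral_nonneg fun _ => rpow_nonneg (norm_nonneg _) p

lemma ifun_nonneg {a b p q c : ℝ} (h : ∀ u ∈ Sset p c, 0 ≤ Ifun a b p q u) :
    0 ≤ ifun a b p q c :=
  Real.sInf_nonneg (by rintro _ ⟨u, hu, rfl⟩; exact h u hu)

lemma Ifun_le (a b p : ℝ) {q : ℝ} (hq : 0 ≤ q) (u : E3 → ℝ) :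
    Ifun a b p q u ≤ a / p * gradPow p u + b / (2 * p) * gradPow p u ^ 2 := by
  unfold Ifun
  nlinarith [one_div_nonneg.2 hq, lpPow_nonneg q u]

lemma ifun_nonpos (a b : ℝ) {p q : ℝ} (hp : 0 < p) (hq : 0 ≤ q) (c : ℝ) : ifun a b p q c ≤ 0 := by
  by_cases hbdd : BddBelow (Ifun a b p q '' Sset p c)
  swap
  · exact (Real.sInf_of_not_bddBelow hbdd).le
  rcases (Sset p c).eq_empty_or_nonempty with hS | ⟨u, hu⟩
  · simp [ifun, hS]
  set f : ℝ → ℝ := fun t => a / p * (t ^ p * gradPow p u) + b / (2 * p) * (t ^ p * gradPow p u) ^ 2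
  have hf : Tendsto f (nhdsWithin 0 (Ioi 0)) (nhds 0) := by
    have hcont : ContinuousAt f 0 :=
      ((continuousAt_rpow_const 0 p (Or.inr hp.le)).mul_const _).const_mul _ |>.add
        ((((continuousAt_rpow_const 0 p (Or.inr hp.le)).mul_const _).pow 2).const_mul _)
    simpa [f, zero_rpow hp.ne'] using hcont.tendsto.mono_left nhdsWithin_le_nhds
  refine ge_of_tendsto hf (eventually_nhdsWithin_of_forall fun t (ht : 0 < t) => ?_)
  calc ifun a b p q c ≤ Ifun a b p q (dilate p t u) :=
        csInf_le hbdd (mem_image_of_mem _ (dilate_mem_Sset hp.ne' ht hu))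
    _ ≤ f t := by simpa only [gradPow_dilate hp.ne' ht] using Ifun_le a b p hq (dilate p t u)

lemma young_linear_quadratic {α β w₁ w₂ G : ℝ} (hα : 0 ≤ α) (hβ : 0 ≤ β) (hw₁ : 0 < w₁)
    (hw₂ : 0 < w₂) (hw : w₁ + w₂ = 1) (hG : 0 ≤ G) :
    (α / w₁) ^ w₁ * (β / w₂) ^ w₂ * G ^ (w₁ + 2 * w₂) ≤ α * G + β * G ^ 2 := by
  have hGsq : (G ^ 2) ^ w₂ = G ^ (2 * w₂) := by
    rw [← rpow_natCast, ← rpow_mul hG]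
    norm_num
  calc (α / w₁) ^ w₁ * (β / w₂) ^ w₂ * G ^ (w₁ + 2 * w₂)
      = (α / w₁ * G) ^ w₁ * (β / w₂ * G ^ 2) ^ w₂ := by
        rw [mul_rpow (by positivity) hG, mul_rpow (by positivity) (by positivity), hGsq,
          rpow_add' hG (by positivity)]
        ring
    _ ≤ w₁ * (α / w₁ * G) + w₂ * (β / w₂ * G ^ 2) :=
        geom_mean_le_arith_mean2_weighted hw₁.le hw₂.le (by positivity) (by positivity) hw
    _ = α * G + β * G ^ 2 := by field_simp

def youngConst (a b p q : ℝ) : ℝ :=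
  (a*p/(2*p^2 - 3*q + 3*p)) ^ ((2*p^2 - 3*q + 3*p)/p^2) *
    (b*p/(6*p*q - 8*p^2)) ^ ((3*q - 3*p - p^2)/p^2)

section YoungConstant

variable {a b p q : ℝ} (ha : 0 ≤ a) (hb : 0 ≤ b) (hq₁ : p + p^2/3 < q) (hq₂ : q < p + 2*p^2/3)
  (hp : 1 ≤ p)
include ha hb hq₁ hq₂ hp

lemma youngConst_nonneg : 0 ≤ youngConst a b p q := by
  have : 0 < p := by linarith
  have : 0 < 2*p^2 - 3*q + 3*p := by linarith
  have : 0 < 6*p*q - 8*p^2 := by nlinarith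
  unfold youngConst
  positivity

/-- The sharp second constant would be `b p / (2 (3q - 3p - p²))`; the one in `youngConst`
is smaller because `6pq - 8p² - 2(3q - 3p - p²) = 6 (p - 1) (q - p) ≥ 0`. -/
lemma youngConst_mul_rpow_le {G : ℝ} (hG : 0 ≤ G) :
    youngConst a b p q * G ^ (3*(q-p)/p^2) ≤ a/p * G + b/(2*p) * G^2 := by
  have hp0 : 0 < p := by linarith
  have hw₁ : 0 < (2*p^2 - 3*q + 3*p)/p^2 := div_pos (by linarith) (by positivity)
  have hw₂ : 0 < (3*q - 3*p - p^2)/p^2 := div_pos (by linarith) (by positivity)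
  have hα : a/p / ((2*p^2 - 3*q + 3*p)/p^2) = a*p/(2*p^2 - 3*q + 3*p) := by
    field_simp
  have hβ : b*p/(6*p*q - 8*p^2) ≤ b/(2*p) / ((3*q - 3*p - p^2)/p^2) := by
    rw [show b/(2*p) / ((3*q - 3*p - p^2)/p^2) = b*p/(2*(3*q - 3*p - p^2)) by field_simp]
    gcongr
    · linarith
    · nlinarith
  have hθ : (2*p^2 - 3*q + 3*p)/p^2 + 2 * ((3*q - 3*p - p^2)/p^2) = 3*(q-p)/p^2 := by ring
  calc youngConst a b p q * G ^ (3*(q-p)/p^2)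
      ≤ (a/p / ((2*p^2 - 3*q + 3*p)/p^2)) ^ ((2*p^2 - 3*q + 3*p)/p^2) *
          (b/(2*p) / ((3*q - 3*p - p^2)/p^2)) ^ ((3*q - 3*p - p^2)/p^2) *
          G ^ ((2*p^2 - 3*q + 3*p)/p^2 + 2 * ((3*q - 3*p - p^2)/p^2)) := by
        rw [hα, hθ, youngConst]
        have : 0 ≤ b*p/(6*p*q - 8*p^2) := div_nonneg (by positivity) (by nlinarith)
        have : 0 ≤ (a*p/(2*p^2 - 3*q + 3*p)) ^ ((2*p^2 - 3*q + 3*p)/p^2) :=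
          rpow_nonneg (div_nonneg (by positivity) (by linarith)) _
        gcongr
    _ ≤ a/p * G + b/(2*p) * G^2 :=
        young_linear_quadratic (by positivity) (by positivity) hw₁ hw₂ (by field_simp; ring) hG

end YoungConstant

lemma exponent_eq {p : ℝ} (q : ℝ) (hp : p ≠ 0) : q - 3*(q-p)/p = (p*q - 3*q + 3*p)/p := by
  rw [eq_div_iff hp]
  field_simp
  ring

lemma exponent_pos {p q : ℝ} (hp : 3/2 < p) (hq₁ : p + p^2/3 < q) (hq₂ : q < p + 2*p^2/3) :
    0 < q - 3*(q-p)/p := by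
  have hp0 : 0 < p := by linarith
  rw [exponent_eq q hp0.ne']
  apply div_pos _ hp0
  nlinarith

lemma cstar_rpow {a b p q QN : ℝ} (hp : p ≠ 0) (he : q - 3*(q-p)/p ≠ 0)
    (h0 : 0 ≤ p * QN ^ (q-p) * youngConst a b p q) :
    cstar a b p q QN ^ (q - 3*(q-p)/p) = p * QN ^ (q-p) * youngConst a b p q := by
  rw [exponent_eq q hp] at he ⊢
  have hexp : p/(p*q - 3*q + 3*p) * ((p*q - 3*q + 3*p)/p) = 1 := by
    rw [div_mul_div_comm, mul_comm, div_self (mul_ne_zero (div_ne_zero_iff.1 he).1 hp)]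
  simp only [cstar, youngConst, mul_assoc] at h0 ⊢
  rw [← rpow_mul h0, hexp, rpow_one]

lemma energy_lower_bound {a b p q QN c G L : ℝ} (ha : 0 ≤ a) (hb : 0 ≤ b) (hp : 3/2 < p)
    (hq₁ : p + p^2/3 < q) (hq₂ : q < p + 2*p^2/3) (hQN : 0 < QN) (hc₀ : 0 ≤ c)
    (hc : c ≤ cstar a b p q QN) (hG : 0 ≤ G)
    (hL : L ≤ q / (p * QN ^ (q-p)) * G ^ (3*(q-p)/p^2) * (c^p) ^ ((q - 3*(q-p)/p)/p)) :
    1/(p * QN ^ (q-p)) * G ^ (3*(q-p)/p^2) *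
        (cstar a b p q QN ^ (q - 3*(q-p)/p) - c ^ (q - 3*(q-p)/p))
      ≤ a/p * G + b/(2*p) * G^2 - 1/q * L ∧
    0 ≤ 1/(p * QN ^ (q-p)) * G ^ (3*(q-p)/p^2) *
        (cstar a b p q QN ^ (q - 3*(q-p)/p) - c ^ (q - 3*(q-p)/p)) := by
  have hp0 : 0 < p := by linarith
  have hq0 : 0 < q := by nlinarith
  have he := exponent_pos hp hq₁ hq₂
  set e := q - 3*(q-p)/p
  set θ := 3*(q-p)/p^2
  set D := p * QN ^ (q-p)
  have hD : 0 < D := by positivity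
  have hY := youngConst_nonneg ha hb hq₁ hq₂ (by linarith : 1 ≤ p)
  have hcstar : cstar a b p q QN ^ e = D * youngConst a b p q :=
    cstar_rpow hp0.ne' he.ne' (mul_nonneg hD.le hY)
  have hGN : 1/q * L ≤ 1/D * G ^ θ * c ^ e := by
    rw [← rpow_mul hc₀, mul_div_cancel₀ _ hp0.ne'] at hL
    calc 1/q * L ≤ 1/q * (q/D * G ^ θ * c ^ e) := by gcongr
      _ = 1/D * G ^ θ * c ^ e := by field_simp
  refine ⟨?_, mul_nonneg (by positivity) (sub_nonneg.2 (rpow_le_rpow hc₀ hc he.le))⟩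
  calc 1/D * G ^ θ * (cstar a b p q QN ^ e - c ^ e)
      = youngConst a b p q * G ^ θ - 1/D * G ^ θ * c ^ e := by
        rw [hcstar]
        field_simp
    _ ≤ a/p * G + b/(2*p) * G^2 - 1/q * L := by
        linarith [youngConst_mul_rpow_le ha hb hq₁ hq₂ (by linarith : 1 ≤ p) hG]

theorem stmt12_general (a b p q c : ℝ) (Q : E3 → ℝ) (ha : 0 < a) (hb : 0 < b)
    (hp1 : 3/2 < p) (hq1 : p + p^2/3 < q) (hq2 : q < p + 2*p^2/3)
    (hQpos : 0 < lpPow p Q)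
    (hGN : ∀ u : E3 → ℝ, Wmem p u →
      lpPow q u ≤ q / (p * ((lpPow p Q) ^ (1/p)) ^ (q-p)) *
        (gradPow p u) ^ (3*(q-p)/p^2) * (lpPow p u) ^ ((q - 3*(q-p)/p)/p))
    (hc0 : 0 < c) (hc : c ≤ cstar a b p q ((lpPow p Q) ^ (1/p))) :
    (∀ u ∈ Sset p c,
      1/(p * ((lpPow p Q) ^ (1/p)) ^ (q-p)) * (gradPow p u) ^ (3*(q-p)/p^2) *
        ((cstar a b p q ((lpPow p Q) ^ (1/p))) ^ (q - 3*(q-p)/p)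
          - c ^ (q - 3*(q-p)/p)) ≤ Ifun a b p q u ∧
      0 ≤ 1/(p * ((lpPow p Q) ^ (1/p)) ^ (q-p)) * (gradPow p u) ^ (3*(q-p)/p^2) *
        ((cstar a b p q ((lpPow p Q) ^ (1/p))) ^ (q - 3*(q-p)/p)
          - c ^ (q - 3*(q-p)/p))) ∧
    ifun a b p q c = 0 := by
  have hQN : 0 < lpPow p Q ^ (1/p) := rpow_pos_of_pos hQpos _
  have bound := fun u (hu : u ∈ Sset p c) =>
    energy_lower_bound ha.le hb.le hp1 hq1 hq2 hQN hc0.le hc (gradPow_nonneg p u)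
      (hu.2 ▸ hGN u hu.1)
  refine ⟨bound, le_antisymm (ifun_nonpos a b (by linarith) (by nlinarith) c) ?_⟩
  exact ifun_nonneg fun u hu => (bound u hu).2.trans (bound u hu).1

theorem stmt12 (a b p q c : ℝ) (Q : E3 → ℝ) (ha : 0 < a) (hb : 0 < b)
    (hp1 : 3/2 < p) (hp2 : p < 3) (hq1 : p + p^2/3 < q) (hq2 : q < p + 2*p^2/3)
    (hQpos : 0 < lpPow p Q)
    (hGN : ∀ u : E3 → ℝ, Wmem p u →
      lpPow q u ≤ q / (p * ((lpPow p Q) ^ (1/p)) ^ (q-p)) *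
        (gradPow p u) ^ (3*(q-p)/p^2) * (lpPow p u) ^ ((q - 3*(q-p)/p)/p))
    (hc0 : 0 < c) (hc : c ≤ cstar a b p q ((lpPow p Q) ^ (1/p))) :
    (∀ u ∈ Sset p c,
      1/(p * ((lpPow p Q) ^ (1/p)) ^ (q-p)) * (gradPow p u) ^ (3*(q-p)/p^2) *
        ((cstar a b p q ((lpPow p Q) ^ (1/p))) ^ (q - 3*(q-p)/p)
          - c ^ (q - 3*(q-p)/p)) ≤ Ifun a b p q u ∧
      0 ≤ 1/(p * ((lpPow p Q) ^ (1/p)) ^ (q-p)) * (gradPow p u) ^ (3*(q-p)/p^2) *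
        ((cstar a b p q ((lpPow p Q) ^ (1/p))) ^ (q - 3*(q-p)/p)
          - c ^ (q - 3*(q-p)/p))) ∧
    ifun a b p q c = 0 :=
  stmt12_general a b p q c Q ha hb hp1 hq1 hq2 hQpos hGN hc0 hc
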